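/- Let A be a unital C*-algebra and p, a ∈ A with p a projection and a positive. If ‖pap − p‖ < 1/2, then p is Cuntz subequivalent to a (p ≲ a), i.e., there is a sequence (x_n) in A with ‖x_n a x_n* − p‖ → 0. -/

import Mathlib

/-!
Put `u = p a p + (1 - p)`. It commutes with `p`, satisfies `p u = p a p`, and
`‖u - 1‖ = ‖p a p - p‖ < 1`, so `u` is positive and invertible. With `c = u ^ (-1/2)`, which
commutes with `p`, one gets exactly `(p c) a (p c)* = c (p a p) c = p (c u c) = p`; so a
constant sequence witnesses `p ≲ a`.
-/

open Filter

namespace IsIdempotentElem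

variable {R : Type*} [Ring R] {p : R}

theorem mul_conj_add_one_sub (hp : IsIdempotentElem p) (a : R) :
    p * (p * a * p + (1 - p)) = p * a * p := by
  simp only [mul_add, mul_sub, mul_one, ← mul_assoc, hp.eq, sub_self, add_zero]

theorem conj_add_one_sub_mul (hp : IsIdempotentElem p) (a : R) :
    (p * a * p + (1 - p)) * p = p * a * p := by
  simp only [add_mul, sub_mul, one_mul, mul_assoc, hp.eq, sub_self, add_zero]

theorem commute_conj_add_one_sub (hp : IsIdempotentElem p) (a : R) :
    Commute p (p * a * p + (1 - p)) :=
  (hp.mul_conj_add_one_sub a).trans (hp.conj_add_one_sub_mul a).symm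

theorem mul_mul_mul_eq_self {a c : R} (hp : IsIdempotentElem p) (hpc : Commute p c)
    (hc : c * (p * a * p + (1 - p)) * c = 1) :
    p * c * a * (c * p) = p := by
  calc p * c * a * (c * p) = c * (p * (p * a * p + (1 - p))) * c := by
        rw [hp.mul_conj_add_one_sub, hpc.eq]
        simp only [mul_assoc]
        rw [← hpc.eq]
    _ = p * (c * (p * a * p + (1 - p)) * c) := by
        rw [← mul_assoc c p, ← hpc.eq]; simp only [mul_assoc]
    _ = p := by rw [hc, mul_one]

end IsIdempotentElem

section CStarAlgebra

variable {A : Type*} [CStarAlgebra A] [PartialOrder A] [StarOrderedRing A]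

theorem IsStarProjection.isStrictlyPositive_conj_add_one_sub {p a : A}
    (hp : IsStarProjection p) (ha : 0 ≤ a) (h : ‖p * a * p - p‖ < 1) :
    IsStrictlyPositive (p * a * p + (1 - p)) := by
  refine ⟨add_nonneg ?_ hp.one_sub_nonneg, ?_⟩
  · simpa only [hp.isSelfAdjoint.star_eq] using star_left_conjugate_nonneg ha p
  · have hu : p * a * p + (1 - p) = 1 - (p - p * a * p) := by abel
    rw [hu]
    exact isUnit_one_sub_of_norm_lt_one (by rwa [norm_sub_rev])

theorem CFC.rpow_neg_half_mul_mul_rpow_neg_half {u : A} (hu : IsStrictlyPositive u) :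
    u ^ (-(1 / 2) : ℝ) * u * u ^ (-(1 / 2) : ℝ) = 1 := by
  nth_rewrite 2 [← CFC.rpow_one u]
  rw [← CFC.rpow_add hu.isUnit, show -(1 / 2 : ℝ) + 1 = 1 / 2 by norm_num]
  exact CFC.rpow_mul_rpow_neg _ hu

end CStarAlgebra

/-- In a unital C*-algebra, if `p` is a projection, `a ≥ 0`, and
`‖p a p - p‖ < 1/2`, then `p ≲ a` in the sense of Cuntz: there is a sequence `(x n)`
with `‖x n * a * star (x n) - p‖ → 0`. -/
theorem stmt11 {A : Type*} [CStarAlgebra A] [PartialOrder A] [StarOrderedRing A]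
    (p a : A) (hp : IsSelfAdjoint p) (hp2 : p * p = p) (ha : 0 ≤ a)
    (hnear : ‖p * a * p - p‖ < 1 / 2) :
    ∃ x : ℕ → A, Tendsto (fun n => ‖x n * a * star (x n) - p‖) atTop (nhds 0) := by
  have hproj : IsStarProjection p := ⟨hp2, hp⟩
  set u := p * a * p + (1 - p)
  have hu : IsStrictlyPositive u :=
    hproj.isStrictlyPositive_conj_add_one_sub ha (hnear.trans (by norm_num))
  set c := u ^ (-(1 / 2) : ℝ)
  have hpc : Commute p c :=
    ((hproj.isIdempotentElem.commute_conj_add_one_sub a).symm.cfc_nnreal _).symm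
  have hstar : star (p * c) = c * p := by
    rw [star_mul, hp.star_eq, (CFC.rpow_nonneg (a := u)).isSelfAdjoint.star_eq]
  refine ⟨fun _ => p * c, ?_⟩
  simp only [hstar, hproj.isIdempotentElem.mul_mul_mul_eq_self hpc
    (CFC.rpow_neg_half_mul_mul_rpow_neg_half hu), sub_self, norm_zero]
  exact tendsto_const_nhds
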